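/- arXiv:math/0507068 — 3 statements merged into one kernel-verified Lean document; each statement's English description precedes it below -/
import Mathlib

section
/- Let J be an almost complex structure and ∇ a connection on ℝ^n, and let a, b ∈ ℝ with b ≠ 0. Then the fiberwise multiplication Z(x,p) = (x, a·p + b·ᵗJ(x)p) is J^{H,∇}-holomorphic if and only if (∇̃J)(J·,·) = (∇̃J)(·,J·), i.e. J^l_j(x)(∇̃J)^k_{li}(x) = (∇̃J)^k_{jl}(x)J^l_i(x) for all x and all indices i,j,k. -/
open Matrix BigOperators

noncomputable section

/-- Partial derivative `∂x_i f` at `x`. -/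
def pd {n : ℕ} (f : (Fin n → ℝ) → ℝ) (i : Fin n) (x : Fin n → ℝ) : ℝ :=
  fderiv ℝ f x (Pi.single i 1)

/-- Symmetrized Christoffel symbols `Γ̃^k_{ij} = (Γ^k_{ij} + Γ^k_{ji})/2`. -/
def symCh {n : ℕ} (Γ : (Fin n → ℝ) → Fin n → Fin n → Fin n → ℝ)
    (x : Fin n → ℝ) (k i j : Fin n) : ℝ :=
  (Γ x k i j + Γ x k j i) / 2

/-- Components of `∇̃J`:
`(∇̃J)^k_{ij} = ∂x_i J^k_j − J^k_l Γ̃^l_{ij} + J^l_j Γ̃^k_{il}`. -/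
def nablaTildeJ {n : ℕ} (J : (Fin n → ℝ) → Matrix (Fin n) (Fin n) ℝ)
    (Γ : (Fin n → ℝ) → Fin n → Fin n → Fin n → ℝ)
    (x : Fin n → ℝ) (k i j : Fin n) : ℝ :=
  pd (fun y => J y k j) i x - (∑ l, J x k l * symCh Γ x l i j)
    + ∑ l, J x l j * symCh Γ x k i l

/-- Lower-left block of the horizontal lift:
`C^i_j(x,p) = p_k (Γ̃^k_{il} J^l_j − Γ̃^k_{jl} J^l_i)`. -/
def Cblock {n : ℕ} (J : (Fin n → ℝ) → Matrix (Fin n) (Fin n) ℝ)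
    (Γ : (Fin n → ℝ) → Fin n → Fin n → Fin n → ℝ) (x p : Fin n → ℝ) :
    Matrix (Fin n) (Fin n) ℝ :=
  Matrix.of fun i j =>
    ∑ k, p k * ((∑ l, symCh Γ x k i l * J x l j) - ∑ l, symCh Γ x k j l * J x l i)

/-- The horizontal lift `J^{H,∇}(x,p)`, acting on tangent vectors `(X,P)` of
`T*ℝ^n = ℝ^n × ℝ^n` by `(X,P) ↦ (J X, C X + ᵗJ P)`. -/
def JHmap {n : ℕ} (J : (Fin n → ℝ) → Matrix (Fin n) (Fin n) ℝ)
    (Γ : (Fin n → ℝ) → Fin n → Fin n → Fin n → ℝ) (x p : Fin n → ℝ) :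
    (Fin n → ℝ) × (Fin n → ℝ) → (Fin n → ℝ) × (Fin n → ℝ) :=
  fun v => ((J x).mulVec v.1, (Cblock J Γ x p).mulVec v.1 + (J x)ᵀ.mulVec v.2)

/-- Fiberwise multiplication by `a + ib`: `Z(x,p) = (x, a·p + b·ᵗJ(x) p)`. -/
def Zmul {n : ℕ} (J : (Fin n → ℝ) → Matrix (Fin n) (Fin n) ℝ) (a b : ℝ) :
    (Fin n → ℝ) × (Fin n → ℝ) → (Fin n → ℝ) × (Fin n → ℝ) :=
  fun w => (w.1, a • w.2 + b • (J w.1)ᵀ.mulVec w.2)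

section Aux

variable {n : ℕ}

lemma fderiv_dir' (f : (Fin n → ℝ) → ℝ) (x : Fin n → ℝ) (Y : Fin n → ℝ) :
    fderiv ℝ f x Y = ∑ m, Y m * pd f m x := by
  have h : Y = ∑ m : Fin n, Y m • (Pi.single m (1:ℝ) : Fin n → ℝ) := by
    funext j
    simp [Pi.single_apply, Finset.sum_apply, Finset.sum_ite_eq']
  conv_lhs => rw [h]
  rw [map_sum]
  exact Finset.sum_congr rfl fun m _ => by simp [pd, smul_eq_mul]

/-- The derivative of `Zmul` as an explicit continuous linear map. -/
def Lmap (J : (Fin n → ℝ) → Matrix (Fin n) (Fin n) ℝ) (a b : ℝ) (x p : Fin n → ℝ) :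
    ((Fin n → ℝ) × (Fin n → ℝ)) →L[ℝ] ((Fin n → ℝ) × (Fin n → ℝ)) :=
  (ContinuousLinearMap.fst ℝ _ _).prod
    (ContinuousLinearMap.pi fun j =>
      a • ((ContinuousLinearMap.proj j).comp (ContinuousLinearMap.snd ℝ _ _)) +
      b • ∑ l, (J x l j • ((ContinuousLinearMap.proj l).comp
            (ContinuousLinearMap.snd ℝ (Fin n → ℝ) (Fin n → ℝ))) +
          p l • ((fderiv ℝ (fun y => J y l j) x).comp
            (ContinuousLinearMap.fst ℝ (Fin n → ℝ) (Fin n → ℝ)))))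

lemma Lmap_apply (J : (Fin n → ℝ) → Matrix (Fin n) (Fin n) ℝ) (a b : ℝ) (x p : Fin n → ℝ)
    (v : (Fin n → ℝ) × (Fin n → ℝ)) :
    Lmap J a b x p v = (v.1, fun j => a * v.2 j +
      b * ∑ l, (J x l j * v.2 l + p l * fderiv ℝ (fun y => J y l j) x v.1)) := by
  simp [Lmap, ContinuousLinearMap.sum_apply, mul_comm]

lemma Zmul_hasFDerivAt (J : (Fin n → ℝ) → Matrix (Fin n) (Fin n) ℝ)
    (hJsmooth : ∀ k j : Fin n, ContDiff ℝ (⊤ : ℕ∞) fun x => J x k j)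
    (a b : ℝ) (x p : Fin n → ℝ) :
    HasFDerivAt (Zmul J a b) (Lmap J a b x p) (x, p) := by
  have hzeq : Zmul J a b = fun w : (Fin n → ℝ) × (Fin n → ℝ) =>
      (w.1, fun j => a * w.2 j + b * ∑ l, J w.1 l j * w.2 l) := by
    funext w
    refine Prod.ext rfl ?_
    funext j
    simp [Zmul, Matrix.mulVec, dotProduct, Matrix.transpose_apply]
  rw [hzeq, Lmap]
  refine HasFDerivAt.prodMk (hasFDerivAt_fst) ?_
  refine hasFDerivAt_pi.mpr fun j => ?_
  have hA : ∀ l : Fin n, HasFDerivAt (fun w : (Fin n → ℝ) × (Fin n → ℝ) => w.2 l)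
      ((ContinuousLinearMap.proj l).comp (ContinuousLinearMap.snd ℝ (Fin n → ℝ) (Fin n → ℝ)))
      (x, p) :=
    fun l => (((ContinuousLinearMap.proj l).comp
      (ContinuousLinearMap.snd ℝ (Fin n → ℝ) (Fin n → ℝ)))).hasFDerivAt
  have hB : ∀ l : Fin n, HasFDerivAt (fun w : (Fin n → ℝ) × (Fin n → ℝ) => J w.1 l j * w.2 l)
      (J x l j • ((ContinuousLinearMap.proj l).comp
          (ContinuousLinearMap.snd ℝ (Fin n → ℝ) (Fin n → ℝ))) +
        p l • ((fderiv ℝ (fun y => J y l j) x).comp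
          (ContinuousLinearMap.fst ℝ (Fin n → ℝ) (Fin n → ℝ)))) (x, p) := by
    intro l
    have h1 : HasFDerivAt (fun w : (Fin n → ℝ) × (Fin n → ℝ) => J w.1 l j)
        ((fderiv ℝ (fun y => J y l j) x).comp
          (ContinuousLinearMap.fst ℝ (Fin n → ℝ) (Fin n → ℝ))) (x, p) :=
      by
        have hd := ((hJsmooth l j).differentiable (by simp) x).hasFDerivAt
        exact hd.comp (x, p)
          (ContinuousLinearMap.fst ℝ (Fin n → ℝ) (Fin n → ℝ)).hasFDerivAt
    exact h1.mul (hA l)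
  have hsum := HasFDerivAt.fun_sum (fun l (_ : l ∈ Finset.univ) => hB l)
  exact ((hA j).const_mul a).add (hsum.const_mul b)

lemma sum_rot (f : Fin n → Fin n → Fin n → ℝ) :
    ∑ l, ∑ i, ∑ k, f l i k = ∑ k, ∑ i, ∑ l, f l i k := by
  rw [Finset.sum_comm]
  exact (Finset.sum_congr rfl fun i _ => Finset.sum_comm).trans Finset.sum_comm

lemma repA (c : Fin n → ℝ) (A : Fin n → Fin n → Fin n → ℝ) (p X : Fin n → ℝ) :
    ∑ l, c l * (∑ i, (∑ k, p k * A k l i) * X i)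
      = ∑ k, ∑ i, p k * X i * ∑ l, c l * A k l i := by
  have h : ∀ l, c l * (∑ i, (∑ k, p k * A k l i) * X i)
      = ∑ i, ∑ k, c l * ((p k * A k l i) * X i) := by
    intro l
    rw [Finset.mul_sum]
    exact Finset.sum_congr rfl fun i _ => by rw [Finset.sum_mul, Finset.mul_sum]
  simp only [h]
  rw [sum_rot]
  refine Finset.sum_congr rfl fun k _ => Finset.sum_congr rfl fun i _ => ?_
  rw [Finset.mul_sum]
  exact Finset.sum_congr rfl fun l _ => by ring

lemma repB (M : Matrix (Fin n) (Fin n) ℝ) (B : Fin n → Fin n → ℝ) (p X : Fin n → ℝ) :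
    ∑ i, (∑ r, (∑ m, M m r * p m) * B r i) * X i
      = ∑ k, ∑ i, p k * X i * ∑ r, M k r * B r i := by
  have h : ∀ i, (∑ r, (∑ m, M m r * p m) * B r i) * X i
      = ∑ r, ∑ m, (M m r * p m) * (B r i * X i) := by
    intro i
    rw [Finset.sum_mul]
    refine Finset.sum_congr rfl fun r _ => ?_
    rw [Finset.sum_mul, Finset.sum_mul]
    exact Finset.sum_congr rfl fun m _ => by ring
  simp only [h]
  rw [sum_rot]
  refine Finset.sum_congr rfl fun k _ => ?_
  rw [Finset.sum_comm]
  refine Finset.sum_congr rfl fun i _ => ?_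
  rw [Finset.mul_sum]
  exact Finset.sum_congr rfl fun r _ => by ring

lemma repC (M : Matrix (Fin n) (Fin n) ℝ) (d : Fin n → Fin n → ℝ) (p X : Fin n → ℝ) :
    ∑ l, p l * ∑ m, (∑ i, M m i * X i) * d l m
      = ∑ k, ∑ i, p k * X i * ∑ m, M m i * d k m := by
  have h : ∀ l, p l * ∑ m, (∑ i, M m i * X i) * d l m
      = ∑ i, ∑ m, p l * ((M m i * X i) * d l m) := by
    intro l
    rw [Finset.mul_sum]
    refine (Finset.sum_congr rfl fun m _ => ?_).trans Finset.sum_comm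
    rw [Finset.sum_mul, Finset.mul_sum]
  simp only [h]
  refine Finset.sum_congr rfl fun k _ => Finset.sum_congr rfl fun i _ => ?_
  rw [Finset.mul_sum]
  exact Finset.sum_congr rfl fun m _ => by ring

lemma repD (c : Fin n → ℝ) (e : Fin n → Fin n → Fin n → ℝ) (p X : Fin n → ℝ) :
    ∑ l, c l * ∑ m, p m * ∑ i, X i * e m l i
      = ∑ k, ∑ i, p k * X i * ∑ l, c l * e k l i := by
  have h : ∀ l, c l * ∑ m, p m * ∑ i, X i * e m l i
      = ∑ m, ∑ i, c l * (p m * (X i * e m l i)) := by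
    intro l
    rw [Finset.mul_sum]
    exact Finset.sum_congr rfl fun m _ => by rw [Finset.mul_sum, Finset.mul_sum]
  simp only [h]
  rw [sum_rot, Finset.sum_comm]
  refine Finset.sum_congr rfl fun k _ => Finset.sum_congr rfl fun i _ => ?_
  rw [Finset.mul_sum]
  exact Finset.sum_congr rfl fun l _ => by ring

variable (J : (Fin n → ℝ) → Matrix (Fin n) (Fin n) ℝ)
    (Γ : (Fin n → ℝ) → Fin n → Fin n → Fin n → ℝ)

lemma key (x : Fin n → ℝ) (i j k : Fin n) :
    (∑ l, J x l j * ((∑ m, symCh Γ x k l m * J x m i) - ∑ m, symCh Γ x k i m * J x m l))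
      + (∑ m, J x m i * pd (fun y => J y k j) m x)
      - (∑ l, J x k l * ((∑ m, symCh Γ x l j m * J x m i) - ∑ m, symCh Γ x l i m * J x m j))
      - (∑ l, J x l j * pd (fun y => J y k l) i x)
    = (∑ l, J x l i * nablaTildeJ J Γ x k l j) - ∑ l, nablaTildeJ J Γ x k i l * J x l j := by
  have swap_congr : ∀ (f g : Fin n → Fin n → ℝ), (∀ l m, f l m = g m l) →
      ∑ l, ∑ m, f l m = ∑ l, ∑ m, g l m := by
    intro f g h
    rw [Finset.sum_comm]
    exact Finset.sum_congr rfl fun m _ => Finset.sum_congr rfl fun l _ => h l m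
  have e1 : (∑ l, J x l j * ((∑ m, symCh Γ x k l m * J x m i) - ∑ m, symCh Γ x k i m * J x m l))
      = (∑ l, ∑ m, J x l j * (symCh Γ x k l m * J x m i))
        - ∑ l, ∑ m, J x l j * (symCh Γ x k i m * J x m l) := by
    simp [mul_sub, Finset.mul_sum, Finset.sum_sub_distrib]
  have e3 : (∑ l, J x k l * ((∑ m, symCh Γ x l j m * J x m i) - ∑ m, symCh Γ x l i m * J x m j))
      = (∑ l, ∑ m, J x k l * (symCh Γ x l j m * J x m i))
        - ∑ l, ∑ m, J x k l * (symCh Γ x l i m * J x m j) := by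
    simp [mul_sub, Finset.mul_sum, Finset.sum_sub_distrib]
  have f1 : (∑ l, J x l i * nablaTildeJ J Γ x k l j)
      = ((∑ l, J x l i * pd (fun y => J y k j) l x)
        - ∑ l, ∑ m, J x l i * (J x k m * symCh Γ x m l j))
        + ∑ l, ∑ m, J x l i * (J x m j * symCh Γ x k l m) := by
    simp [nablaTildeJ, mul_sub, mul_add, Finset.mul_sum, Finset.sum_sub_distrib,
      Finset.sum_add_distrib]
  have f2 : (∑ l, nablaTildeJ J Γ x k i l * J x l j)
      = ((∑ l, pd (fun y => J y k l) i x * J x l j)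
        - ∑ l, ∑ m, (J x k m * symCh Γ x m i l) * J x l j)
        + ∑ l, ∑ m, (J x m l * symCh Γ x k i m) * J x l j := by
    simp [nablaTildeJ, sub_mul, add_mul, Finset.sum_mul, Finset.sum_sub_distrib,
      Finset.sum_add_distrib]
  have hF2 : (∑ l, ∑ m, J x l i * (J x k m * symCh Γ x m l j))
      = ∑ l, ∑ m, J x k l * (symCh Γ x l j m * J x m i) := by
    refine swap_congr _ _ fun l m => ?_
    simp only [symCh]
    ring
  have hF3 : (∑ l, ∑ m, J x l i * (J x m j * symCh Γ x k l m))
      = ∑ l, ∑ m, J x l j * (symCh Γ x k l m * J x m i) := by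
    refine swap_congr _ _ fun l m => ?_
    simp only [symCh]
    ring
  have hF5 : (∑ l, ∑ m, (J x k m * symCh Γ x m i l) * J x l j)
      = ∑ l, ∑ m, J x k l * (symCh Γ x l i m * J x m j) := by
    refine swap_congr _ _ fun l m => ?_
    ring
  have hF6 : (∑ l, ∑ m, (J x m l * symCh Γ x k i m) * J x l j)
      = ∑ l, ∑ m, J x l j * (symCh Γ x k i m * J x m l) := by
    refine Finset.sum_congr rfl fun l _ => Finset.sum_congr rfl fun m _ => by ring
  have hF1 : (∑ l, J x l i * pd (fun y => J y k j) l x)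
      = ∑ m, J x m i * pd (fun y => J y k j) m x := rfl
  have hF4 : (∑ l, pd (fun y => J y k l) i x * J x l j)
      = ∑ l, J x l j * pd (fun y => J y k l) i x := by
    exact Finset.sum_congr rfl fun l _ => by ring
  rw [e1, e3, f1, f2, hF2, hF3, hF5, hF6, hF1, hF4]
  ring

lemma core (x p X : Fin n → ℝ) (j : Fin n) :
    (∑ l, J x l j * (∑ i, (∑ k, p k * ((∑ m, symCh Γ x k l m * J x m i)
          - ∑ m, symCh Γ x k i m * J x m l)) * X i))
      + (∑ l, p l * ∑ m, (∑ i, J x m i * X i) * pd (fun y => J y l j) m x)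
    = (∑ i, (∑ r, (∑ m, J x m r * p m) * ((∑ m, symCh Γ x r j m * J x m i)
          - ∑ m, symCh Γ x r i m * J x m j)) * X i)
      + (∑ l, J x l j * ∑ m, p m * ∑ i, X i * pd (fun y => J y m l) i x)
      + ∑ k, ∑ i, p k * X i * ((∑ l, J x l i * nablaTildeJ J Γ x k l j)
          - ∑ l, nablaTildeJ J Γ x k i l * J x l j) := by
  rw [repA (fun l => J x l j)
      (fun k l i => (∑ m, symCh Γ x k l m * J x m i) - ∑ m, symCh Γ x k i m * J x m l) p X,
    repC (J x) (fun l m => pd (fun y => J y l j) m x) p X,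
    repB (J x) (fun r i => (∑ m, symCh Γ x r j m * J x m i) - ∑ m, symCh Γ x r i m * J x m j) p X,
    repD (fun l => J x l j) (fun m l i => pd (fun y => J y m l) i x) p X]
  simp only [← Finset.sum_add_distrib]
  refine Finset.sum_congr rfl fun k _ => Finset.sum_congr rfl fun i _ => ?_
  have h := key J Γ x i j k
  linear_combination (p k * X i) * h

lemma main_id (a b : ℝ) (x p X P : Fin n → ℝ) (j : Fin n) :
    a * (((Cblock J Γ x p).mulVec X + (J x)ᵀ.mulVec P) j)
      + b * ∑ l, (J x l j * (((Cblock J Γ x p).mulVec X + (J x)ᵀ.mulVec P) l)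
          + p l * fderiv ℝ (fun y => J y l j) x ((J x).mulVec X))
    = ((Cblock J Γ x (a • p + b • (J x)ᵀ.mulVec p)).mulVec X) j
      + (∑ l, J x l j * (a * P l + b * ∑ m, (J x m l * P m
          + p m * fderiv ℝ (fun y => J y m l) x X)))
      + b * ∑ k, ∑ i, p k * X i * ((∑ l, J x l i * nablaTildeJ J Γ x k l j)
          - ∑ l, nablaTildeJ J Γ x k i l * J x l j) := by
  have hd1 : ∀ l : Fin n, fderiv ℝ (fun y => J y l j) x ((J x).mulVec X)
      = ∑ m, ((J x).mulVec X) m * pd (fun y => J y l j) m x := fun l => fderiv_dir' _ x _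
  have hd2 : ∀ m l : Fin n, fderiv ℝ (fun y => J y m l) x X
      = ∑ i, X i * pd (fun y => J y m l) i x := fun m l => fderiv_dir' _ x _
  have hC : ∀ (q : Fin n → ℝ) (r : Fin n), ((Cblock J Γ x q).mulVec X) r
      = ∑ i, (∑ k, q k * ((∑ m, symCh Γ x k r m * J x m i)
          - ∑ m, symCh Γ x k i m * J x m r)) * X i := by
    intro q r
    simp [Cblock, Matrix.mulVec, dotProduct]
  have hT : ∀ (W : Fin n → ℝ) (r : Fin n), ((J x)ᵀ.mulVec W) r = ∑ m, J x m r * W m := by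
    intro W r
    simp [Matrix.mulVec, dotProduct]
  have hM : ∀ m, ((J x).mulVec X) m = ∑ i, J x m i * X i := by
    intro m
    simp [Matrix.mulVec, dotProduct]
  simp only [hd1, hd2, Pi.add_apply, Pi.smul_apply, smul_eq_mul, hC, hT, hM]
  have hcore := core J Γ x p X j
  have hsplit1 : ∑ l, (J x l j * ((∑ i, (∑ k, p k * ((∑ m, symCh Γ x k l m * J x m i)
          - ∑ m, symCh Γ x k i m * J x m l)) * X i) + ∑ m, J x m l * P m)
        + p l * ∑ m, (∑ i, J x m i * X i) * pd (fun y => J y l j) m x)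
      = (∑ l, J x l j * (∑ i, (∑ k, p k * ((∑ m, symCh Γ x k l m * J x m i)
          - ∑ m, symCh Γ x k i m * J x m l)) * X i))
        + (∑ l, J x l j * ∑ m, J x m l * P m)
        + ∑ l, p l * ∑ m, (∑ i, J x m i * X i) * pd (fun y => J y l j) m x := by
    rw [← Finset.sum_add_distrib, ← Finset.sum_add_distrib]
    exact Finset.sum_congr rfl fun l _ => by ring
  have hq : ∑ i, (∑ k, (a * p k + b * ∑ m, J x m k * p m) * ((∑ m, symCh Γ x k j m * J x m i)
          - ∑ m, symCh Γ x k i m * J x m j)) * X i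
      = a * (∑ i, (∑ k, p k * ((∑ m, symCh Γ x k j m * J x m i)
          - ∑ m, symCh Γ x k i m * J x m j)) * X i)
        + b * (∑ i, (∑ r, (∑ m, J x m r * p m) * ((∑ m, symCh Γ x r j m * J x m i)
          - ∑ m, symCh Γ x r i m * J x m j)) * X i) := by
    have h1 : ∀ i, (∑ k, (a * p k + b * ∑ m, J x m k * p m) * ((∑ m, symCh Γ x k j m * J x m i)
          - ∑ m, symCh Γ x k i m * J x m j))
        = a * (∑ k, p k * ((∑ m, symCh Γ x k j m * J x m i)
            - ∑ m, symCh Γ x k i m * J x m j))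
          + b * (∑ r, (∑ m, J x m r * p m) * ((∑ m, symCh Γ x r j m * J x m i)
            - ∑ m, symCh Γ x r i m * J x m j)) := by
      intro i
      rw [Finset.mul_sum, Finset.mul_sum, ← Finset.sum_add_distrib]
      exact Finset.sum_congr rfl fun k _ => by ring
    simp only [h1]
    rw [Finset.mul_sum, Finset.mul_sum, ← Finset.sum_add_distrib]
    exact Finset.sum_congr rfl fun i _ => by ring
  have hsplit3 : ∑ l, J x l j * (a * P l + b * ∑ m, (J x m l * P m
          + p m * ∑ i, X i * pd (fun y => J y m l) i x))
      = a * (∑ m, J x m j * P m)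
        + b * (∑ l, J x l j * ∑ m, J x m l * P m)
        + b * (∑ l, J x l j * ∑ m, p m * ∑ i, X i * pd (fun y => J y m l) i x) := by
    have h2 : ∀ l, (∑ m, (J x m l * P m + p m * ∑ i, X i * pd (fun y => J y m l) i x))
        = (∑ m, J x m l * P m) + ∑ m, p m * ∑ i, X i * pd (fun y => J y m l) i x :=
      fun l => Finset.sum_add_distrib
    simp only [h2]
    rw [Finset.mul_sum, Finset.mul_sum, Finset.mul_sum, ← Finset.sum_add_distrib,
      ← Finset.sum_add_distrib]
    exact Finset.sum_congr rfl fun l _ => by ring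
  linear_combination b * hsplit1 - hq - hsplit3 + b * hcore

end Aux

/-- the fiberwise multiplication `Z` is `J^{H,∇}`-holomorphic iff
`(∇̃J)(J·,·) = (∇̃J)(·,J·)`, i.e. `J^l_j (∇̃J)^k_{li} = (∇̃J)^k_{jl} J^l_i`
(sum over `l`). -/
theorem statement17 (n : ℕ)
    (J : (Fin n → ℝ) → Matrix (Fin n) (Fin n) ℝ)
    (Γ : (Fin n → ℝ) → Fin n → Fin n → Fin n → ℝ)
    (hJsmooth : ∀ k j : Fin n, ContDiff ℝ (⊤ : ℕ∞) fun x => J x k j)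
    (hΓsmooth : ∀ k i j : Fin n, ContDiff ℝ (⊤ : ℕ∞) fun x => Γ x k i j)
    (hJ : ∀ x, J x * J x = -1)
    (a b : ℝ) (hb : b ≠ 0) :
    (∀ (x p : Fin n → ℝ) (v : (Fin n → ℝ) × (Fin n → ℝ)),
        fderiv ℝ (Zmul J a b) (x, p) (JHmap J Γ x p v) =
          JHmap J Γ (Zmul J a b (x, p)).1 (Zmul J a b (x, p)).2
            (fderiv ℝ (Zmul J a b) (x, p) v)) ↔
      (∀ (x : Fin n → ℝ) (i j k : Fin n),
        ∑ l, J x l j * nablaTildeJ J Γ x k l i =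
          ∑ l, nablaTildeJ J Γ x k j l * J x l i) := by
  have hfd : ∀ x p : Fin n → ℝ, fderiv ℝ (Zmul J a b) (x, p) = Lmap J a b x p :=
    fun x p => (Zmul_hasFDerivAt J hJsmooth a b x p).fderiv
  -- per-point reformulation
  have hiff : ∀ (x p : Fin n → ℝ) (v : (Fin n → ℝ) × (Fin n → ℝ)),
      (fderiv ℝ (Zmul J a b) (x, p) (JHmap J Γ x p v) =
        JHmap J Γ (Zmul J a b (x, p)).1 (Zmul J a b (x, p)).2
          (fderiv ℝ (Zmul J a b) (x, p) v)) ↔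
      ∀ j, (∑ k, ∑ i, p k * v.1 i * ((∑ l, J x l i * nablaTildeJ J Γ x k l j)
          - ∑ l, nablaTildeJ J Γ x k i l * J x l j)) = 0 := by
    intro x p v
    rw [hfd, Lmap_apply, Lmap_apply]
    have h1 : (Zmul J a b (x, p)).1 = x := rfl
    have h2 : (Zmul J a b (x, p)).2 = a • p + b • (J x)ᵀ.mulVec p := rfl
    rw [h1, h2]
    simp only [JHmap]
    have hT : ∀ (W : Fin n → ℝ) (r : Fin n), ((J x)ᵀ.mulVec W) r = ∑ m, J x m r * W m := by
      intro W r
      simp [Matrix.mulVec, dotProduct]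
    rw [Prod.ext_iff]
    simp only [true_and]
    rw [funext_iff]
    constructor
    · intro h j
      have hj := h j
      have hm := main_id J Γ a b x p v.1 v.2 j
      simp only [Pi.add_apply, hT] at hj
      have hb' : b * (∑ k, ∑ i, p k * v.1 i * ((∑ l, J x l i * nablaTildeJ J Γ x k l j)
          - ∑ l, nablaTildeJ J Γ x k i l * J x l j)) = 0 := by
        simp only [Pi.add_apply, hT] at hm
        linear_combination hj - hm
      exact (mul_eq_zero.mp hb').resolve_left hb
    · intro h j
      have hm := main_id J Γ a b x p v.1 v.2 j
      rw [h j, mul_zero, add_zero] at hm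
      simp only [Pi.add_apply, hT]
      simp only [Pi.add_apply, hT] at hm
      linear_combination hm
  constructor
  · intro H x i j k
    have h := (hiff x (Pi.single k 1) (Pi.single j 1, 0)).mp
      (H x (Pi.single k 1) (Pi.single j 1, 0)) i
    simp only [Pi.single_apply, ite_mul, one_mul, zero_mul, mul_ite, mul_one, mul_zero,
      Finset.sum_ite_eq', Finset.mem_univ, if_true] at h
    linear_combination h
  · intro H x p v
    refine (hiff x p v).mpr fun j => ?_
    have hz : ∀ k i : Fin n, (∑ l, J x l i * nablaTildeJ J Γ x k l j)
        - ∑ l, nablaTildeJ J Γ x k i l * J x l j = 0 := by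
      intro k i
      rw [H x j i k]
      ring
    simp only [hz, mul_zero, Finset.sum_const_zero]
end
end

section
/- (Key step in the non-compatibility of symplectic forms with lifted structures.) Let m ≥ 2, set n = 2m, and let J₀ be the linear map of ℝ^n × ℝ^n given by the block-diagonal matrix diag(J_st, J_st), where J_st e_{2i−1} = e_{2i} and J_st e_{2i} = −e_{2i−1} for 1 ≤ i ≤ m. Let V ⊆ ℝ^n × ℝ^n be the linear subspace V = {(X,P) : X₁ = 0 and P_j = 0 for all j ≥ 2}. Then there is no antisymmetric bilinear form ω on ℝ^n × ℝ^n such that ω vanishes identically on V × V and ω(u, J₀u) > 0 for every nonzero u ∈ ℝ^n × ℝ^n. -/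
open Matrix BigOperators

noncomputable section

/-- The standard complex structure matrix on `ℝ^{2m}`:
`J_st e_{2i−1} = e_{2i}` and `J_st e_{2i} = −e_{2i−1}` (1-indexed); in 0-indexed
terms `J_st e_{2i} = e_{2i+1}` and `J_st e_{2i+1} = −e_{2i}`. -/
def Jst (m : ℕ) : Matrix (Fin (2 * m)) (Fin (2 * m)) ℝ :=
  Matrix.of fun k l =>
    if k.val = l.val + 1 ∧ l.val % 2 = 0 then 1
    else if l.val = k.val + 1 ∧ k.val % 2 = 0 then -1
    else 0

/-- The block-diagonal almost complex structure `diag(J_st, J_st)` on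
`ℝ^{2m} × ℝ^{2m}`. -/
def J0 (m : ℕ) : (Fin (2 * m) → ℝ) × (Fin (2 * m) → ℝ) →
    (Fin (2 * m) → ℝ) × (Fin (2 * m) → ℝ) :=
  fun u => ((Jst m).mulVec u.1, (Jst m).mulVec u.2)

/-- The subspace `V = {(X,P) : X₁ = 0 and P_j = 0 for j ≥ 2}` (1-indexed), modelling
the tangent space of the conormal bundle of `{x₁ = 0}` at `(0, e₁*)`; in 0-indexed
terms `X 0 = 0` and `P j = 0` for `j ≠ 0`. -/
def conormalTangent (m : ℕ) : Set ((Fin (2 * m) → ℝ) × (Fin (2 * m) → ℝ)) :=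
  {u | (∀ i : Fin (2 * m), i.val = 0 → u.1 i = 0) ∧
    ∀ j : Fin (2 * m), j.val ≠ 0 → u.2 j = 0}

/-- for `m ≥ 2` there is no antisymmetric bilinear form `ω` on
`ℝ^{2m} × ℝ^{2m}` vanishing identically on `V × V` and taming `J₀`
(`ω(u, J₀u) > 0` for all `u ≠ 0`). -/
theorem statement18 (m : ℕ) (hm : 2 ≤ m) :
    ¬ ∃ ω : ((Fin (2 * m) → ℝ) × (Fin (2 * m) → ℝ)) →ₗ[ℝ]
        ((Fin (2 * m) → ℝ) × (Fin (2 * m) → ℝ)) →ₗ[ℝ] ℝ,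
      (∀ u v, ω u v = -ω v u) ∧
      (∀ u ∈ conormalTangent m, ∀ v ∈ conormalTangent m, ω u v = 0) ∧
      (∀ u, u ≠ 0 → 0 < ω u (J0 m u)) := by
  rintro ⟨ω, hanti, hvan, htame⟩
  have h4 : (2 : ℕ) < 2 * m := by omega
  set i2 : Fin (2 * m) := ⟨2, h4⟩ with hi2
  set u : (Fin (2 * m) → ℝ) × (Fin (2 * m) → ℝ) := (Pi.single i2 1, 0) with hu'
  have hmv : (Jst m).mulVec u.1 = fun i => Jst m i i2 := by
    funext i
    simp [hu', Matrix.mulVec_single]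
  have hu : u ∈ conormalTangent m := by
    constructor
    · intro i hi
      have : i ≠ i2 := by intro h; rw [h] at hi; simp [hi2] at hi
      simp [hu', Pi.single_eq_of_ne this]
    · intro j _; rfl
  have hJu : J0 m u ∈ conormalTangent m := by
    constructor
    · intro i hi
      rw [show (J0 m u).1 = (Jst m).mulVec u.1 from rfl, hmv]
      simp only [Jst, Matrix.of_apply, hi2]
      rw [if_neg (by omega), if_neg (by omega)]
    · intro j _
      show (Jst m).mulVec u.2 j = 0
      simp [hu', Matrix.mulVec_zero]
  have hne : u ≠ 0 := by
    intro h
    have := congrFun (congrArg Prod.fst h) i2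
    simp [hu'] at this
  have h1 := htame u hne
  rw [hvan u hu (J0 m u) hJu] at h1
  exact lt_irrefl 0 h1
end
end

section
/- Let J₁, J₂ be almost complex structures on open subsets U, V of ℝ^n and let f : U → V be a (J₁,J₂)-holomorphic smooth diffeomorphism. Then the cotangent lift f̃ intertwines the complete lifts: d f̃ ∘ J₁^c(x,p) = J₂^c(f̃(x,p)) ∘ d f̃ for all (x,p) ∈ U × ℝ^n, i.e. f̃_* J₁^c = J₂^c. -/
open Matrix BigOperators

noncomputable section

/-- Jacobian matrix `(d_x f)^k_i = ∂x_i f^k` of a map `f : ℝ^n → ℝ^n`. -/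
def Dmat {n : ℕ} (f : (Fin n → ℝ) → (Fin n → ℝ)) (x : Fin n → ℝ) :
    Matrix (Fin n) (Fin n) ℝ :=
  Matrix.of fun k i => pd (fun y => f y k) i x

/-- Cotangent lift `f̃(x,p) = (f(x), ᵗ((d_x f)^{−1}) p)` of a diffeomorphism. -/
def cotLift {n : ℕ} (f : (Fin n → ℝ) → (Fin n → ℝ)) :
    (Fin n → ℝ) × (Fin n → ℝ) → (Fin n → ℝ) × (Fin n → ℝ) :=
  fun w => (f w.1, ((Dmat f w.1)⁻¹)ᵀ.mulVec w.2)

/-- Lower-left block of the complete lift `J^c`: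
`P^i_j(x,p) = p_k (∂x_j J^k_i − ∂x_i J^k_j)`. -/
def Pblock {n : ℕ} (J : (Fin n → ℝ) → Matrix (Fin n) (Fin n) ℝ) (x p : Fin n → ℝ) :
    Matrix (Fin n) (Fin n) ℝ :=
  Matrix.of fun i j =>
    ∑ k, p k * (pd (fun y => J y k i) j x - pd (fun y => J y k j) i x)

/-- The complete lift `J^c(x,p)`, acting on tangent vectors `(X,P)` of
`T*ℝ^n = ℝ^n × ℝ^n` by `(X,P) ↦ (J X, P X + ᵗJ P)`. -/
def JcMap {n : ℕ} (J : (Fin n → ℝ) → Matrix (Fin n) (Fin n) ℝ) (x p : Fin n → ℝ) :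
    (Fin n → ℝ) × (Fin n → ℝ) → (Fin n → ℝ) × (Fin n → ℝ) :=
  fun v => ((J x).mulVec v.1, (Pblock J x p).mulVec v.1 + (J x)ᵀ.mulVec v.2)

namespace Aux

variable {n : ℕ}

lemma fderiv_component {f : (Fin n → ℝ) → (Fin n → ℝ)} {x : Fin n → ℝ}
    (h : DifferentiableAt ℝ f x) (k : Fin n) :
    fderiv ℝ (fun y => f y k) x = (ContinuousLinearMap.proj k).comp (fderiv ℝ f x) :=
  (hasFDerivAt_pi'.1 h.hasFDerivAt k).fderiv

lemma fderiv_scalar_eq_sum {φ : (Fin n → ℝ) → ℝ} {z : Fin n → ℝ}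
    (w : Fin n → ℝ) :
    fderiv ℝ φ z w = ∑ m, w m * pd φ m z := by
  conv_lhs => rw [show w = ∑ m, Pi.single m (w m) from (Finset.univ_sum_single w).symm]
  rw [map_sum]
  refine Finset.sum_congr rfl fun m _ => ?_
  have : (Pi.single m (w m) : Fin n → ℝ) = w m • (Pi.single m 1 : Fin n → ℝ) := by
    funext t
    by_cases ht : t = m <;> simp [Pi.single_apply, ht]
  rw [this, _root_.map_smul, smul_eq_mul]
  rfl

lemma fderiv_vec_eq_mulVec {f : (Fin n → ℝ) → (Fin n → ℝ)} {x : Fin n → ℝ}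
    (h : DifferentiableAt ℝ f x) (v : Fin n → ℝ) :
    fderiv ℝ f x v = (Dmat f x).mulVec v := by
  funext k
  have h1 : fderiv ℝ f x v k = fderiv ℝ (fun y => f y k) x v := by
    rw [fderiv_component h k]; rfl
  rw [h1, fderiv_scalar_eq_sum v]
  simp only [Dmat, Matrix.mulVec, dotProduct, Matrix.of_apply]
  exact Finset.sum_congr rfl fun i _ => mul_comm _ _

lemma pd_eq_fderiv_apply {f : (Fin n → ℝ) → (Fin n → ℝ)} {x : Fin n → ℝ}
    (h : DifferentiableAt ℝ f x) (k i : Fin n) :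
    pd (fun y => f y k) i x = fderiv ℝ f x (Pi.single i 1) k := by
  rw [pd, fderiv_component h k]; rfl

lemma Dmat_comp {φ ψ : (Fin n → ℝ) → (Fin n → ℝ)} {x : Fin n → ℝ}
    (hφ : DifferentiableAt ℝ φ (ψ x)) (hψ : DifferentiableAt ℝ ψ x) :
    Dmat (fun y => φ (ψ y)) x = Dmat φ (ψ x) * Dmat ψ x := by
  ext k i
  have hcomp : DifferentiableAt ℝ (fun y => φ (ψ y)) x := hφ.comp x hψ
  have h1 : Dmat (fun y => φ (ψ y)) x k i
      = fderiv ℝ (fun y => φ (ψ y)) x (Pi.single i 1) k := pd_eq_fderiv_apply hcomp k i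
  rw [h1, show (fun y => φ (ψ y)) = φ ∘ ψ from rfl, fderiv_comp x hφ hψ]
  have : fderiv ℝ φ (ψ x) (fderiv ℝ ψ x (Pi.single i 1))
      = (Dmat φ (ψ x)).mulVec ((Dmat ψ x).mulVec (Pi.single i 1)) := by
    rw [fderiv_vec_eq_mulVec hψ, fderiv_vec_eq_mulVec hφ]
  simp only [ContinuousLinearMap.coe_comp', Function.comp_apply]
  rw [this, Matrix.mulVec_mulVec, Matrix.mulVec_single]
  simp [mul_one]

lemma Dmat_id {x : Fin n → ℝ} : Dmat (fun y : Fin n → ℝ => y) x = 1 := by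
  ext k i
  have : (fun y : Fin n → ℝ => y k) = (ContinuousLinearMap.proj (R := ℝ) (φ := fun _ : Fin n => ℝ) k) := rfl
  simp only [Dmat, Matrix.of_apply, pd, this, ContinuousLinearMap.fderiv]
  simp [Matrix.one_apply, Pi.single_apply, eq_comm]

lemma Dmat_congr {f f₂ : (Fin n → ℝ) → (Fin n → ℝ)} {x : Fin n → ℝ}
    (h : f =ᶠ[nhds x] f₂) : Dmat f x = Dmat f₂ x := by
  ext k i
  simp only [Dmat, Matrix.of_apply, pd]
  rw [Filter.EventuallyEq.fderiv_eq (h.mono fun y hy => congrFun hy k)]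

end Aux


namespace Aux
variable {n : ℕ}

lemma swap12 (f : Fin n → Fin n → ℝ) : ∑ a, ∑ b, f a b = ∑ b, ∑ a, f a b :=
  Finset.sum_comm

lemma swap23 (f : Fin n → Fin n → Fin n → ℝ) :
    ∑ a, ∑ b, ∑ c, f a b c = ∑ a, ∑ c, ∑ b, f a b c :=
  Finset.sum_congr rfl fun a _ => Finset.sum_comm

lemma swap13 (f : Fin n → Fin n → Fin n → ℝ) :
    ∑ a, ∑ b, ∑ c, f a b c = ∑ c, ∑ b, ∑ a, f a b c := by
  rw [swap23, Finset.sum_comm, swap23]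

lemma vecMul_apply (u : Fin n → ℝ) (M : Matrix (Fin n) (Fin n) ℝ) (a : Fin n) :
    (u ᵥ* M) a = ∑ c, u c * M c a := by
  simp [Matrix.vecMul, dotProduct]

lemma core (F B J1 J2 : Matrix (Fin n) (Fin n) ℝ) (p q : Fin n → ℝ)
    (K DJ2 C : Fin n → Matrix (Fin n) (Fin n) ℝ) (DJ1p : Fin n → Fin n → ℝ)
    (hq : q = p ᵥ* B)
    (hBF : B * F = 1) (hFB : F * B = 1) (hJB : J1 * B = B * J2)
    (hsym : ∀ i c d, (F * K i * F) c d = (F * K d * F) c i)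
    (hC : ∀ j, C j = ∑ m, F m j • DJ2 m)
    (hDJ1p : ∀ j, DJ1p j = p ᵥ* ((K j * J2 + B * C j - J1 * K j) * F)) :
    ∀ a j, (∑ m, (p ᵥ* K m) a * J1 m j) + (∑ i, B i a * (DJ1p j i - DJ1p i j))
      = (∑ b, (∑ c, q c * (DJ2 b c a - DJ2 a c b)) * F b j)
        + ∑ b, J2 b a * (p ᵥ* K j) b := by
  intro a j
  set Sg : Fin n → Matrix (Fin n) (Fin n) ℝ := fun i => F * K i * F with hSg
  have hsym' : ∀ i c d, Sg i c d = Sg d c i := by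
    intro i c d
    simp only [hSg]
    exact hsym i c d
  have hK : ∀ i, K i = B * Sg i * B := by
    intro i
    simp only [hSg]
    calc K i = (B * F) * K i * (F * B) := by rw [hBF, hFB, Matrix.one_mul, Matrix.mul_one]
    _ = B * (F * K i * F) * B := by simp only [Matrix.mul_assoc]
  have hpB : ∀ N : Matrix (Fin n) (Fin n) ℝ, p ᵥ* (B * N) = q ᵥ* N := by
    intro N; rw [hq, Matrix.vecMul_vecMul]
  have hBJ2F : B * (J2 * F) = J1 := by
    rw [← Matrix.mul_assoc, ← hJB, Matrix.mul_assoc, hBF, Matrix.mul_one]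
  -- c1 : the M₁ * J₁ term matches the D1 term
  have hc1 : ∑ m, (p ᵥ* K m) a * J1 m j = ∑ i, B i a * (p ᵥ* (K i * J2 * F)) j := by
    have h1 : ∀ i, K i * J2 * F = B * (Sg i * J1) := by
      intro i
      rw [hK i]
      calc B * Sg i * B * J2 * F = B * (Sg i * (B * (J2 * F))) := by
            simp only [Matrix.mul_assoc]
      _ = B * (Sg i * J1) := by rw [hBJ2F]
    calc ∑ m, (p ᵥ* K m) a * J1 m j
        = ∑ m, (q ᵥ* (Sg m * B)) a * J1 m j := by
          refine Finset.sum_congr rfl fun m _ => ?_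
          rw [hK m, Matrix.mul_assoc, hpB]
      _ = ∑ m, ∑ c, ∑ d, q c * Sg m c d * B d a * J1 m j := by
          refine Finset.sum_congr rfl fun m _ => ?_
          rw [vecMul_apply, Finset.sum_mul]
          refine Finset.sum_congr rfl fun c _ => ?_
          rw [Matrix.mul_apply, Finset.mul_sum, Finset.sum_mul]
          exact Finset.sum_congr rfl fun d _ => by ring
      _ = ∑ m, ∑ c, ∑ d, q c * Sg d c m * B d a * J1 m j := by
          refine Finset.sum_congr rfl fun m _ => Finset.sum_congr rfl fun c _ =>
            Finset.sum_congr rfl fun d _ => ?_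
          rw [hsym' m c d]
      _ = ∑ d, ∑ c, ∑ m, q c * Sg d c m * B d a * J1 m j := swap13 _
      _ = ∑ i, B i a * (p ᵥ* (K i * J2 * F)) j := by
          refine Finset.sum_congr rfl fun d _ => ?_
          rw [h1 d, hpB, vecMul_apply, Finset.mul_sum]
          refine Finset.sum_congr rfl fun c _ => ?_
          rw [Matrix.mul_apply, Finset.mul_sum, Finset.mul_sum]
          exact Finset.sum_congr rfl fun m _ => by ring
  -- c2 : the A3 term matches the D3 term
  have hc2 : (p ᵥ* (J1 * K j)) a = ∑ i, B i a * (p ᵥ* (J1 * K i * F)) j := by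
    have h1 : ∀ i, J1 * K i * F = B * (J2 * Sg i) := by
      intro i
      rw [hK i]
      calc J1 * (B * Sg i * B) * F = (J1 * B) * (Sg i * (B * F)) := by
            simp only [Matrix.mul_assoc]
      _ = B * (J2 * Sg i) := by rw [hBF, Matrix.mul_one, hJB, Matrix.mul_assoc]
    have h2 : J1 * K j = B * (J2 * (Sg j * B)) := by
      rw [hK j]
      calc J1 * (B * Sg j * B) = (J1 * B) * (Sg j * B) := by simp only [Matrix.mul_assoc]
      _ = B * (J2 * (Sg j * B)) := by rw [hJB, Matrix.mul_assoc]
    calc (p ᵥ* (J1 * K j)) a = (q ᵥ* (J2 * (Sg j * B))) a := by rw [h2, hpB]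
      _ = ∑ c, ∑ e, ∑ d, q c * J2 c e * Sg j e d * B d a := by
          rw [vecMul_apply]
          refine Finset.sum_congr rfl fun c _ => ?_
          rw [Matrix.mul_apply, Finset.mul_sum]
          refine Finset.sum_congr rfl fun e _ => ?_
          rw [Matrix.mul_apply, Finset.mul_sum, Finset.mul_sum]
          exact Finset.sum_congr rfl fun d _ => by ring
      _ = ∑ c, ∑ e, ∑ d, q c * J2 c e * Sg d e j * B d a := by
          refine Finset.sum_congr rfl fun c _ => Finset.sum_congr rfl fun e _ =>
            Finset.sum_congr rfl fun d _ => ?_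
          rw [hsym' j e d]
      _ = ∑ d, ∑ e, ∑ c, q c * J2 c e * Sg d e j * B d a := swap13 _
      _ = ∑ i, B i a * (p ᵥ* (J1 * K i * F)) j := by
          refine Finset.sum_congr rfl fun d _ => ?_
          rw [h1 d, hpB, vecMul_apply, Finset.mul_sum]
          rw [swap12 (fun e c => q c * J2 c e * Sg d e j * B d a)]
          refine Finset.sum_congr rfl fun c _ => ?_
          rw [Matrix.mul_apply, Finset.mul_sum, Finset.mul_sum]
          exact Finset.sum_congr rfl fun e _ => by ring
  -- c3 : the D2 term matches second half of the P₂ term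
  have hc3 : ∑ i, B i a * (p ᵥ* (B * C i * F)) j
      = ∑ b, (∑ c, q c * DJ2 a c b) * F b j := by
    have hFBδ : ∀ m, ∑ i, F m i * B i a = (1 : Matrix (Fin n) (Fin n) ℝ) m a := by
      intro m; rw [← hFB, Matrix.mul_apply]
    calc ∑ i, B i a * (p ᵥ* (B * C i * F)) j
        = ∑ i, ∑ c, ∑ e, ∑ m, B i a * (q c * (F m i * DJ2 m c e * F e j)) := by
          refine Finset.sum_congr rfl fun i _ => ?_
          rw [Matrix.mul_assoc, hpB, vecMul_apply, Finset.mul_sum]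
          refine Finset.sum_congr rfl fun c _ => ?_
          rw [Matrix.mul_apply, Finset.mul_sum, Finset.mul_sum]
          refine Finset.sum_congr rfl fun e _ => ?_
          rw [hC i]
          simp only [Finset.sum_apply, Matrix.sum_apply, Matrix.smul_apply, smul_eq_mul]
          rw [Finset.sum_mul, Finset.mul_sum, Finset.mul_sum]
      _ = ∑ c, ∑ e, ∑ m, (∑ i, F m i * B i a) * (q c * (DJ2 m c e * F e j)) := by
          rw [swap12 (fun i c => ∑ e, ∑ m, B i a * (q c * (F m i * DJ2 m c e * F e j)))]
          refine Finset.sum_congr rfl fun c _ => ?_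
          rw [swap12 (fun i e => ∑ m, B i a * (q c * (F m i * DJ2 m c e * F e j)))]
          refine Finset.sum_congr rfl fun e _ => ?_
          rw [swap12 (fun i m => B i a * (q c * (F m i * DJ2 m c e * F e j)))]
          refine Finset.sum_congr rfl fun m _ => ?_
          rw [Finset.sum_mul]
          exact Finset.sum_congr rfl fun i _ => by ring
      _ = ∑ c, ∑ e, q c * (DJ2 a c e * F e j) := by
          refine Finset.sum_congr rfl fun c _ => Finset.sum_congr rfl fun e _ => ?_
          simp only [hFBδ, Matrix.one_apply]
          simp only [ite_mul, one_mul, zero_mul]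
          rw [Finset.sum_ite_eq' Finset.univ a (fun m => q c * (DJ2 m c e * F e j))]
          simp
      _ = ∑ b, (∑ c, q c * DJ2 a c b) * F b j := by
          rw [swap12 (fun c e => q c * (DJ2 a c e * F e j))]
          refine Finset.sum_congr rfl fun b _ => ?_
          rw [Finset.sum_mul]
          exact Finset.sum_congr rfl fun c _ => by ring
  -- c4 : A1 matches Term5
  have hc4 : (p ᵥ* (K j * J2)) a = ∑ b, J2 b a * (p ᵥ* K j) b := by
    rw [← Matrix.vecMul_vecMul, vecMul_apply]
    exact Finset.sum_congr rfl fun b _ => mul_comm _ _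
  -- c5 : A2 matches first half of the P₂ term
  have hc5 : (p ᵥ* (B * C j)) a = ∑ b, (∑ c, q c * DJ2 b c a) * F b j := by
    rw [hpB, vecMul_apply]
    calc ∑ c, q c * C j c a = ∑ c, ∑ b, q c * (F b j * DJ2 b c a) := by
          refine Finset.sum_congr rfl fun c _ => ?_
          rw [hC j]
          simp only [Finset.sum_apply, Matrix.sum_apply, Matrix.smul_apply, smul_eq_mul]
          rw [Finset.mul_sum]
      _ = ∑ b, (∑ c, q c * DJ2 b c a) * F b j := by
          rw [swap12 (fun c b => q c * (F b j * DJ2 b c a))]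
          refine Finset.sum_congr rfl fun b _ => ?_
          rw [Finset.sum_mul]
          exact Finset.sum_congr rfl fun c _ => by ring
  -- assemble
  have hsplitA : ∑ i, B i a * DJ1p j i
      = (p ᵥ* (K j * J2)) a + (p ᵥ* (B * C j)) a - (p ᵥ* (J1 * K j)) a := by
    have : ∑ i, B i a * DJ1p j i = (DJ1p j ᵥ* B) a := by
      rw [vecMul_apply]; exact Finset.sum_congr rfl fun i _ => mul_comm _ _
    rw [this, hDJ1p j, Matrix.vecMul_vecMul]
    have : (K j * J2 + B * C j - J1 * K j) * F * B = K j * J2 + B * C j - J1 * K j := by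
      rw [Matrix.mul_assoc, hFB, Matrix.mul_one]
    rw [this, Matrix.vecMul_sub, Matrix.vecMul_add]
    simp [Pi.add_apply, Pi.sub_apply]
  have hsplitD : ∑ i, B i a * DJ1p i j
      = ∑ i, B i a * (p ᵥ* (K i * J2 * F)) j + ∑ i, B i a * (p ᵥ* (B * C i * F)) j
        - ∑ i, B i a * (p ᵥ* (J1 * K i * F)) j := by
    rw [← Finset.sum_add_distrib, ← Finset.sum_sub_distrib]
    refine Finset.sum_congr rfl fun i _ => ?_
    rw [hDJ1p i]
    have : (K i * J2 + B * C i - J1 * K i) * F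
        = K i * J2 * F + B * C i * F - J1 * K i * F := by
      rw [Matrix.sub_mul, Matrix.add_mul]
    rw [this, Matrix.vecMul_sub, Matrix.vecMul_add]
    simp only [Pi.add_apply, Pi.sub_apply]
    ring
  have hsplitP2 : ∑ b, (∑ c, q c * (DJ2 b c a - DJ2 a c b)) * F b j
      = ∑ b, (∑ c, q c * DJ2 b c a) * F b j - ∑ b, (∑ c, q c * DJ2 a c b) * F b j := by
    rw [← Finset.sum_sub_distrib]
    refine Finset.sum_congr rfl fun b _ => ?_
    have : ∑ c, q c * (DJ2 b c a - DJ2 a c b)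
        = ∑ c, q c * DJ2 b c a - ∑ c, q c * DJ2 a c b := by
      rw [← Finset.sum_sub_distrib]
      exact Finset.sum_congr rfl fun c _ => by ring
    rw [this, sub_mul]
  have hsub : ∑ i, B i a * (DJ1p j i - DJ1p i j)
      = ∑ i, B i a * DJ1p j i - ∑ i, B i a * DJ1p i j := by
    rw [← Finset.sum_sub_distrib]
    exact Finset.sum_congr rfl fun i _ => by ring
  rw [hsub, hsplitA, hsplitD, hsplitP2, hc1, hc2, hc3, hc4, hc5]
  ring

end Aux


namespace Aux
variable {n : ℕ}

lemma diffAt_of_contDiffOn {s : Set (Fin n → ℝ)} {x : Fin n → ℝ}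
    {E : Type*} [NormedAddCommGroup E] [NormedSpace ℝ E] {φ : (Fin n → ℝ) → E}
    (hs : IsOpen s) (hx : x ∈ s) (h : ContDiffOn ℝ (⊤ : ℕ∞) φ s) : DifferentiableAt ℝ φ x :=
  ((h x hx).contDiffAt (hs.mem_nhds hx)).differentiableAt (by simp)

-- smoothness of the partial-derivative fields of a smooth function on an open set
lemma pd_contDiffOn {s : Set (Fin n → ℝ)} {g : (Fin n → ℝ) → (Fin n → ℝ)}
    (hs : IsOpen s) (hg : ContDiffOn ℝ (⊤ : ℕ∞) g s) (k i : Fin n) :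
    ContDiffOn ℝ (⊤ : ℕ∞) (fun z => pd (fun u => g u k) i z) s := by
  have hgk : ContDiffOn ℝ (⊤ : ℕ∞) (fun z => g z k) s :=
    (ContinuousLinearMap.proj (R := ℝ) (φ := fun _ : Fin n => ℝ) k).contDiff.comp_contDiffOn hg
  have hdgk : ContDiffOn ℝ (⊤ : ℕ∞) (fderiv ℝ (fun z => g z k)) s :=
    hgk.fderiv_of_isOpen hs (by simp)
  have : (fun z => pd (fun u => g u k) i z)
      = fun z => (ContinuousLinearMap.apply ℝ ℝ (Pi.single i 1)) (fderiv ℝ (fun u => g u k) z) := rfl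
  rw [this]
  exact (ContinuousLinearMap.apply ℝ ℝ (Pi.single i 1)).contDiff.comp_contDiffOn hdgk

-- symmetry of second partials
lemma pd_pd_symm {s : Set (Fin n → ℝ)} {g : (Fin n → ℝ) → (Fin n → ℝ)} {z : Fin n → ℝ}
    (hs : IsOpen s) (hz : z ∈ s) (hg : ContDiffOn ℝ (⊤ : ℕ∞) g s) (k i m : Fin n) :
    pd (fun w => pd (fun u => g u k) i w) m z = pd (fun w => pd (fun u => g u k) m w) i z := by
  have hgk : ContDiffOn ℝ (⊤ : ℕ∞) (fun u => g u k) s :=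
    (ContinuousLinearMap.proj (R := ℝ) (φ := fun _ : Fin n => ℝ) k).contDiff.comp_contDiffOn hg
  have hdgk : ContDiffOn ℝ (⊤ : ℕ∞) (fderiv ℝ (fun u => g u k)) s :=
    hgk.fderiv_of_isOpen hs (by simp)
  have hDg : DifferentiableAt ℝ (fderiv ℝ (fun u => g u k)) z :=
    diffAt_of_contDiffOn hs hz hdgk
  have hsym : IsSymmSndFDerivAt ℝ (fun u => g u k) z :=
    ((hgk z hz).contDiffAt (hs.mem_nhds hz)).isSymmSndFDerivAt (by rw [minSmoothness_of_isRCLikeNormedField]; exact WithTop.coe_le_coe.2 (le_top : (2 : ℕ∞) ≤ ⊤))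
  have key : ∀ i' m' : Fin n,
      pd (fun w => pd (fun u => g u k) i' w) m' z
        = fderiv ℝ (fderiv ℝ (fun u => g u k)) z (Pi.single m' 1) (Pi.single i' 1) := by
    intro i' m'
    have hcomp : (fun w => pd (fun u => g u k) i' w)
        = fun w => (ContinuousLinearMap.apply ℝ ℝ (Pi.single i' 1))
            (fderiv ℝ (fun u => g u k) w) := rfl
    have : fderiv ℝ (fun w => pd (fun u => g u k) i' w) z
        = (ContinuousLinearMap.apply ℝ ℝ (Pi.single i' 1)).comp
            (fderiv ℝ (fderiv ℝ (fun u => g u k)) z) := by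
      rw [hcomp]
      exact (((ContinuousLinearMap.apply ℝ ℝ (Pi.single i' 1)).hasFDerivAt).comp z
        hDg.hasFDerivAt).fderiv
    rw [pd, this]; rfl
  rw [key i m, key m i]
  exact hsym _ _

end Aux


namespace Aux
variable {n : ℕ}

lemma rot3 (f : Fin n → Fin n → Fin n → ℝ) :
    ∑ a, ∑ b, ∑ c, f a b c = ∑ c, ∑ a, ∑ b, f a b c := by
  rw [show (∑ a, ∑ b, ∑ c, f a b c) = ∑ a, ∑ c, ∑ b, f a b c from
    Finset.sum_congr rfl fun a _ => Finset.sum_comm, Finset.sum_comm]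

lemma rot4 (f : Fin n → Fin n → Fin n → Fin n → ℝ) :
    ∑ a, ∑ b, ∑ c, ∑ d, f a b c d = ∑ d, ∑ a, ∑ b, ∑ c, f a b c d := by
  rw [show (∑ a, ∑ b, ∑ c, ∑ d, f a b c d) = ∑ a, ∑ d, ∑ b, ∑ c, f a b c d from
    Finset.sum_congr rfl fun a _ => rot3 _, Finset.sum_comm]

end Aux

/-- if `f : U → V` is a `(J₁,J₂)`-holomorphic smooth diffeomorphism,
then its cotangent lift intertwines the complete lifts: `f̃_* J₁^c = J₂^c`. -/
theorem statement19 (n : ℕ) (U V : Set (Fin n → ℝ)) (hU : IsOpen U) (hV : IsOpen V)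
    (f g : (Fin n → ℝ) → (Fin n → ℝ))
    (hf : ContDiffOn ℝ (⊤ : ℕ∞) f U) (hg : ContDiffOn ℝ (⊤ : ℕ∞) g V)
    (hfU : Set.MapsTo f U V) (hgV : Set.MapsTo g V U)
    (hgf : ∀ x ∈ U, g (f x) = x) (hfg : ∀ y ∈ V, f (g y) = y)
    (J₁ J₂ : (Fin n → ℝ) → Matrix (Fin n) (Fin n) ℝ)
    (hJ₁smooth : ∀ k j : Fin n, ContDiffOn ℝ (⊤ : ℕ∞) (fun x => J₁ x k j) U)
    (hJ₂smooth : ∀ k j : Fin n, ContDiffOn ℝ (⊤ : ℕ∞) (fun x => J₂ x k j) V)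
    (hJ₁ : ∀ x ∈ U, J₁ x * J₁ x = -1) (hJ₂ : ∀ y ∈ V, J₂ y * J₂ y = -1)
    (hholo : ∀ x ∈ U, Dmat f x * J₁ x = J₂ (f x) * Dmat f x) :
    ∀ x ∈ U, ∀ (p : Fin n → ℝ) (v : (Fin n → ℝ) × (Fin n → ℝ)),
      fderiv ℝ (cotLift f) (x, p) (JcMap J₁ x p v) =
        JcMap J₂ (f x) (((Dmat f x)⁻¹)ᵀ.mulVec p)
          (fderiv ℝ (cotLift f) (x, p) v) := by
  intro x hx p v
  obtain ⟨X, P⟩ := v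
  have hxV : f x ∈ V := hfU hx
  have hfd : ∀ y ∈ U, DifferentiableAt ℝ f y := fun y hy => Aux.diffAt_of_contDiffOn hU hy hf
  have hgd : ∀ z ∈ V, DifferentiableAt ℝ g z := fun z hz => Aux.diffAt_of_contDiffOn hV hz hg
  -- inverse Jacobian identities
  have hBFy : ∀ y ∈ U, Dmat g (f y) * Dmat f y = 1 := by
    intro y hy
    rw [← Aux.Dmat_comp (hgd _ (hfU hy)) (hfd y hy)]
    have hev : (fun z => g (f z)) =ᶠ[nhds y] (fun z => z) := by
      filter_upwards [hU.mem_nhds hy] with z hz using hgf z hz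
    rw [Aux.Dmat_congr hev, Aux.Dmat_id]
  have hFBy : ∀ y ∈ U, Dmat f y * Dmat g (f y) = 1 := by
    intro y hy
    have h1 : Dmat f (g (f y)) * Dmat g (f y) = 1 := by
      rw [← Aux.Dmat_comp (x := f y) (hfd _ (hgV (hfU hy))) (hgd _ (hfU hy))]
      have hev : (fun z => f (g z)) =ᶠ[nhds (f y)] (fun z => z) := by
        filter_upwards [hV.mem_nhds (hfU hy)] with z hz using hfg z hz
      rw [Aux.Dmat_congr hev, Aux.Dmat_id]
    rwa [hgf y hy] at h1
  -- pointwise holomorphy in terms of g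
  have hrel : ∀ y ∈ U, J₁ y * Dmat g (f y) = Dmat g (f y) * J₂ (f y) := by
    intro y hy
    calc J₁ y * Dmat g (f y)
        = (Dmat g (f y) * Dmat f y) * (J₁ y * Dmat g (f y)) := by
          rw [hBFy y hy, Matrix.one_mul]
      _ = Dmat g (f y) * ((Dmat f y * J₁ y) * Dmat g (f y)) := by
          simp only [Matrix.mul_assoc]
      _ = Dmat g (f y) * ((J₂ (f y) * Dmat f y) * Dmat g (f y)) := by rw [hholo y hy]
      _ = Dmat g (f y) * (J₂ (f y) * (Dmat f y * Dmat g (f y))) := by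
          simp only [Matrix.mul_assoc]
      _ = Dmat g (f y) * J₂ (f y) := by rw [hFBy y hy, Matrix.mul_one]
  -- unfold JcMap and rewrite the inverse transpose
  have hqmv : ((Dmat f x)⁻¹)ᵀ.mulVec p = p ᵥ* Dmat g (f x) := by
    rw [Matrix.inv_eq_left_inv (hBFy x hx), Matrix.mulVec_transpose]
  simp only [JcMap]
  rw [hqmv]
  -- local data
  set F : Matrix (Fin n) (Fin n) ℝ := Dmat f x with hFdef
  set B : Matrix (Fin n) (Fin n) ℝ := Dmat g (f x) with hBdef
  set J1 : Matrix (Fin n) (Fin n) ℝ := J₁ x with hJ1def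
  set J2 : Matrix (Fin n) (Fin n) ℝ := J₂ (f x) with hJ2def
  set H : Fin n → Fin n → Fin n → ℝ :=
    fun k i m => pd (fun w => pd (fun u => g u k) i w) m (f x) with hHdef
  set Kmat : Fin n → Matrix (Fin n) (Fin n) ℝ :=
    fun j => Matrix.of fun d i => ∑ m, F m j * H d i m with hKdef
  set DJ2 : Fin n → Matrix (Fin n) (Fin n) ℝ :=
    fun m => Matrix.of fun c a => pd (fun z => J₂ z c a) m (f x) with hDJ2def
  set DJ1mat : Fin n → Matrix (Fin n) (Fin n) ℝ :=
    fun j => Matrix.of fun k d => pd (fun y => J₁ y k d) j x with hDJ1def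
  set C : Fin n → Matrix (Fin n) (Fin n) ℝ := fun j => ∑ m, F m j • DJ2 m with hCdef
  set DJ1p : Fin n → Fin n → ℝ := fun j i => ∑ k, p k * DJ1mat j k i with hDJ1pdef
  have hBF : B * F = 1 := hBFy x hx
  have hFB : F * B = 1 := hFBy x hx
  have hJB : J1 * B = B * J2 := hrel x hx
  have hH' : ∀ k i m, H k i m = H k m i := fun k i m => Aux.pd_pd_symm hV hxV hg k i m
  have hφd : ∀ k i, DifferentiableAt ℝ (fun z => pd (fun u => g u k) i z) (f x) :=
    fun k i => Aux.diffAt_of_contDiffOn hV hxV (Aux.pd_contDiffOn hV hg k i)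
  have hφexp : ∀ k i (w : Fin n → ℝ),
      fderiv ℝ (fun z => pd (fun u => g u k) i z) (f x) w = ∑ m, w m * H k i m :=
    fun k i w => Aux.fderiv_scalar_eq_sum w
  -- symmetry for Kmat
  have hsymK : ∀ i c d, (F * Kmat i * F) c d = (F * Kmat d * F) c i := by
    have expand : ∀ i' c d', (F * Kmat i' * F) c d'
        = ∑ e, ∑ k, ∑ m, F c k * F m i' * H k e m * F e d' := by
      intro i' c d'
      rw [Matrix.mul_apply]
      refine Finset.sum_congr rfl fun e _ => ?_
      rw [Matrix.mul_apply, Finset.sum_mul]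
      refine Finset.sum_congr rfl fun k _ => ?_
      have : Kmat i' k e = ∑ m, F m i' * H k e m := rfl
      rw [this, Finset.mul_sum, Finset.sum_mul]
      exact Finset.sum_congr rfl fun m _ => by ring
    intro i c d
    rw [expand i c d, expand d c i]
    calc ∑ e, ∑ k, ∑ m, F c k * F m i * H k e m * F e d
        = ∑ e, ∑ k, ∑ m, F c k * F m i * H k m e * F e d := by
          refine Finset.sum_congr rfl fun e _ => Finset.sum_congr rfl fun k _ =>
            Finset.sum_congr rfl fun m _ => ?_
          rw [hH' k e m]
      _ = ∑ m, ∑ k, ∑ e, F c k * F m i * H k m e * F e d := Aux.swap13 _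
      _ = ∑ e, ∑ k, ∑ m, F c k * F m d * H k e m * F e i := by
          refine Finset.sum_congr rfl fun e _ => Finset.sum_congr rfl fun k _ =>
            Finset.sum_congr rfl fun m _ => ?_
          ring
  -- differentiating the relation J₁ ∘ = ∘ J₂
  have hR3 : ∀ j, DJ1mat j * B + J1 * Kmat j = Kmat j * J2 + B * C j := by
    intro j
    ext k i
    have had : ∀ d : Fin n, DifferentiableAt ℝ (fun y => J₁ y k d) x :=
      fun d => Aux.diffAt_of_contDiffOn hU hx (hJ₁smooth k d)
    have hbd : ∀ d : Fin n, DifferentiableAt ℝ (fun y => pd (fun u => g u d) i (f y)) x :=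
      fun d => (hφd d i).comp x (hfd x hx)
    have hbd' : ∀ c : Fin n, DifferentiableAt ℝ (fun y => pd (fun u => g u k) c (f y)) x :=
      fun c => (hφd k c).comp x (hfd x hx)
    have had' : ∀ c : Fin n, DifferentiableAt ℝ (fun y => J₂ (f y) c i) x :=
      fun c => (Aux.diffAt_of_contDiffOn hV hxV (hJ₂smooth c i)).comp x (hfd x hx)
    have hFv : fderiv ℝ f x (Pi.single j 1) = fun m => F m j * 1 := by
      rw [Aux.fderiv_vec_eq_mulVec (hfd x hx), ← hFdef, Matrix.mulVec_single]
      ext m; simp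
    have hchain : ∀ (d : Fin n),
        fderiv ℝ (fun y => pd (fun u => g u d) i (f y)) x (Pi.single j 1) = Kmat j d i := by
      intro d
      have : (fun y => pd (fun u => g u d) i (f y))
          = (fun z => pd (fun u => g u d) i z) ∘ f := rfl
      rw [this, fderiv_comp x (hφd d i) (hfd x hx)]
      show fderiv ℝ (fun z => pd (fun u => g u d) i z) (f x) (fderiv ℝ f x (Pi.single j 1)) = _
      rw [hFv, hφexp d i]
      show ∑ m, F m j * 1 * H d i m = Kmat j d i
      have : Kmat j d i = ∑ m, F m j * H d i m := rfl
      rw [this]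
      exact Finset.sum_congr rfl fun m _ => by ring
    have hchain' : ∀ (c : Fin n),
        fderiv ℝ (fun y => pd (fun u => g u k) c (f y)) x (Pi.single j 1) = Kmat j k c := by
      intro c
      have : (fun y => pd (fun u => g u k) c (f y))
          = (fun z => pd (fun u => g u k) c z) ∘ f := rfl
      rw [this, fderiv_comp x (hφd k c) (hfd x hx)]
      show fderiv ℝ (fun z => pd (fun u => g u k) c z) (f x) (fderiv ℝ f x (Pi.single j 1)) = _
      rw [hFv, hφexp k c]
      show ∑ m, F m j * 1 * H k c m = Kmat j k c
      have : Kmat j k c = ∑ m, F m j * H k c m := rfl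
      rw [this]
      exact Finset.sum_congr rfl fun m _ => by ring
    have hchain2 : ∀ (c : Fin n),
        fderiv ℝ (fun y => J₂ (f y) c i) x (Pi.single j 1) = ∑ m, F m j * DJ2 m c i := by
      intro c
      have : (fun y => J₂ (f y) c i) = (fun z => J₂ z c i) ∘ f := rfl
      rw [this, fderiv_comp x (Aux.diffAt_of_contDiffOn hV hxV (hJ₂smooth c i)) (hfd x hx)]
      show fderiv ℝ (fun z => J₂ z c i) (f x) (fderiv ℝ f x (Pi.single j 1)) = _
      rw [hFv, Aux.fderiv_scalar_eq_sum]
      refine Finset.sum_congr rfl fun m _ => ?_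
      have : DJ2 m c i = pd (fun z => J₂ z c i) m (f x) := rfl
      rw [this]; ring
    have he : fderiv ℝ (fun y => ∑ d, J₁ y k d * pd (fun u => g u d) i (f y)) x
        = fderiv ℝ (fun y => ∑ c, pd (fun u => g u k) c (f y) * J₂ (f y) c i) x := by
      apply Filter.EventuallyEq.fderiv_eq
      filter_upwards [hU.mem_nhds hx] with y hy
      have h1 : (J₁ y * Dmat g (f y)) k i = (Dmat g (f y) * J₂ (f y)) k i := by
        rw [hrel y hy]
      simpa [Matrix.mul_apply, Dmat] using h1
    have heval1 : fderiv ℝ (fun y => ∑ d, J₁ y k d * pd (fun u => g u d) i (f y)) x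
        (Pi.single j 1)
        = ∑ d, (J1 k d * Kmat j d i + B d i * DJ1mat j k d) := by
      rw [fderiv_fun_sum (fun d _ => (had d).fun_mul (hbd d))]
      rw [ContinuousLinearMap.sum_apply]
      refine Finset.sum_congr rfl fun d _ => ?_
      rw [fderiv_fun_mul (had d) (hbd d)]
      simp only [ContinuousLinearMap.add_apply, ContinuousLinearMap.coe_smul',
        Pi.smul_apply, smul_eq_mul]
      rw [hchain d]
      have h2 : fderiv ℝ (fun y => J₁ y k d) x (Pi.single j 1) = DJ1mat j k d := rfl
      rw [h2]
      have h3 : pd (fun u => g u d) i (f x) = B d i := rfl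
      rw [h3]
    have heval2 : fderiv ℝ (fun y => ∑ c, pd (fun u => g u k) c (f y) * J₂ (f y) c i) x
        (Pi.single j 1)
        = ∑ c, (B k c * (∑ m, F m j * DJ2 m c i) + J2 c i * Kmat j k c) := by
      rw [fderiv_fun_sum (fun c _ => (hbd' c).fun_mul (had' c))]
      rw [ContinuousLinearMap.sum_apply]
      refine Finset.sum_congr rfl fun c _ => ?_
      rw [fderiv_fun_mul (hbd' c) (had' c)]
      simp only [ContinuousLinearMap.add_apply, ContinuousLinearMap.coe_smul',
        Pi.smul_apply, smul_eq_mul]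
      rw [hchain' c, hchain2 c]
      have h3 : pd (fun u => g u k) c (f x) = B k c := rfl
      rw [h3]
    have key2 : (∑ d, J1 k d * Kmat j d i) + (∑ d, B d i * DJ1mat j k d)
        = (∑ c, B k c * (∑ m, F m j * DJ2 m c i)) + ∑ c, J2 c i * Kmat j k c := by
      have key : ∑ d, (J1 k d * Kmat j d i + B d i * DJ1mat j k d)
          = ∑ c, (B k c * (∑ m, F m j * DJ2 m c i) + J2 c i * Kmat j k c) := by
        rw [← heval1, ← heval2, he]
      rw [Finset.sum_add_distrib, Finset.sum_add_distrib] at key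
      exact key
    simp only [Matrix.add_apply, Matrix.mul_apply]
    have e1 : ∑ d, DJ1mat j k d * B d i = ∑ d, B d i * DJ1mat j k d :=
      Finset.sum_congr rfl fun d _ => mul_comm _ _
    have e2 : ∑ c, Kmat j k c * J2 c i = ∑ c, J2 c i * Kmat j k c :=
      Finset.sum_congr rfl fun c _ => mul_comm _ _
    have e3 : ∑ c, B k c * C j c i = ∑ c, B k c * (∑ m, F m j * DJ2 m c i) := by
      refine Finset.sum_congr rfl fun c _ => ?_
      have : C j c i = ∑ m, F m j * DJ2 m c i := by
        simp [hCdef, Matrix.sum_apply]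
      rw [this]
    rw [e1, e2, e3]
    linarith [key2]
  -- solve for DJ1mat
  have hDJ1mat : ∀ j, DJ1mat j = (Kmat j * J2 + B * C j - J1 * Kmat j) * F := by
    intro j
    have h1 : DJ1mat j * B = Kmat j * J2 + B * C j - J1 * Kmat j :=
      eq_sub_of_add_eq (hR3 j)
    calc DJ1mat j = DJ1mat j * 1 := (Matrix.mul_one _).symm
      _ = DJ1mat j * (B * F) := by rw [hBF]
      _ = (DJ1mat j * B) * F := by rw [Matrix.mul_assoc]
      _ = (Kmat j * J2 + B * C j - J1 * Kmat j) * F := by rw [h1]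
  have hDJ1p : ∀ j, DJ1p j = p ᵥ* ((Kmat j * J2 + B * C j - J1 * Kmat j) * F) := by
    intro j
    funext i
    rw [Aux.vecMul_apply, ← hDJ1mat j]
  have hcore := Aux.core F B J1 J2 p (p ᵥ* B) Kmat DJ2 C DJ1p rfl hBF hFB hJB hsymK
    (fun j => rfl) hDJ1p
  -- evaluation of the derivative of the cotangent lift
  have heval : ∀ Y Q : Fin n → ℝ, fderiv ℝ (cotLift f) (x, p) (Y, Q)
      = (F *ᵥ Y, fun i => ∑ k, (p k * (∑ m, (F *ᵥ Y) m * H k i m) + B k i * Q k)) := by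
    have hfe : cotLift f =ᶠ[nhds (x, p)]
        (fun w : (Fin n → ℝ) × (Fin n → ℝ) =>
          (f w.1, fun i => ∑ k, w.2 k * pd (fun u => g u k) i (f w.1))) := by
      have hmem : U ×ˢ (Set.univ : Set (Fin n → ℝ)) ∈ nhds (x, p) :=
        (hU.prod isOpen_univ).mem_nhds ⟨hx, trivial⟩
      filter_upwards [hmem] with w hw
      simp only [cotLift]
      congr 1
      rw [Matrix.inv_eq_left_inv (hBFy w.1 hw.1), Matrix.mulVec_transpose]
      funext i
      rw [Aux.vecMul_apply]
      rfl
    have hL1 : HasFDerivAt (fun w : (Fin n → ℝ) × (Fin n → ℝ) => f w.1)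
        ((fderiv ℝ f x).comp (ContinuousLinearMap.fst ℝ (Fin n → ℝ) (Fin n → ℝ))) (x, p) :=
      (hfd x hx).hasFDerivAt.comp (x, p) hasFDerivAt_fst
    have hL2 : ∀ i, HasFDerivAt
        (fun w : (Fin n → ℝ) × (Fin n → ℝ) => ∑ k, w.2 k * pd (fun u => g u k) i (f w.1))
        (∑ k, (p k • ((fderiv ℝ (fun z => pd (fun u => g u k) i z) (f x)).comp
            ((fderiv ℝ f x).comp (ContinuousLinearMap.fst ℝ (Fin n → ℝ) (Fin n → ℝ))))
          + pd (fun u => g u k) i (f x) • ((ContinuousLinearMap.proj k).comp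
            (ContinuousLinearMap.snd ℝ (Fin n → ℝ) (Fin n → ℝ))))) (x, p) := by
      intro i
      refine HasFDerivAt.fun_sum fun k _ => ?_
      have hA : HasFDerivAt (fun w : (Fin n → ℝ) × (Fin n → ℝ) => w.2 k)
          ((ContinuousLinearMap.proj k).comp
            (ContinuousLinearMap.snd ℝ (Fin n → ℝ) (Fin n → ℝ))) (x, p) :=
        ((ContinuousLinearMap.proj k).comp
          (ContinuousLinearMap.snd ℝ (Fin n → ℝ) (Fin n → ℝ))).hasFDerivAt
      have hB : HasFDerivAt
          (fun w : (Fin n → ℝ) × (Fin n → ℝ) => pd (fun u => g u k) i (f w.1))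
          ((fderiv ℝ (fun z => pd (fun u => g u k) i z) (f x)).comp
            ((fderiv ℝ f x).comp (ContinuousLinearMap.fst ℝ (Fin n → ℝ) (Fin n → ℝ)))) (x, p) :=
        by have h := (hφd k i).hasFDerivAt.comp (x, p) hL1; exact h
      exact hA.fun_mul hB
    have hh : HasFDerivAt
        (fun w : (Fin n → ℝ) × (Fin n → ℝ) =>
          (f w.1, fun i => ∑ k, w.2 k * pd (fun u => g u k) i (f w.1)))
        (((fderiv ℝ f x).comp (ContinuousLinearMap.fst ℝ (Fin n → ℝ) (Fin n → ℝ))).prod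
          (ContinuousLinearMap.pi fun i =>
            (∑ k, (p k • ((fderiv ℝ (fun z => pd (fun u => g u k) i z) (f x)).comp
              ((fderiv ℝ f x).comp (ContinuousLinearMap.fst ℝ (Fin n → ℝ) (Fin n → ℝ))))
            + pd (fun u => g u k) i (f x) • ((ContinuousLinearMap.proj k).comp
              (ContinuousLinearMap.snd ℝ (Fin n → ℝ) (Fin n → ℝ))))))) (x, p) :=
      hL1.prodMk (hasFDerivAt_pi.2 hL2)
    intro Y Q
    rw [hfe.fderiv_eq, hh.fderiv]
    rw [ContinuousLinearMap.prod_apply, Prod.mk.injEq]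
    constructor
    · show fderiv ℝ f x Y = F *ᵥ Y
      exact Aux.fderiv_vec_eq_mulVec (hfd x hx) Y
    · funext i
      simp only [ContinuousLinearMap.pi_apply, ContinuousLinearMap.sum_apply,
        ContinuousLinearMap.add_apply, ContinuousLinearMap.coe_smul', Pi.smul_apply,
        ContinuousLinearMap.coe_comp', Function.comp_apply, ContinuousLinearMap.coe_fst',
        ContinuousLinearMap.coe_snd', ContinuousLinearMap.proj_apply, smul_eq_mul]
      refine Finset.sum_congr rfl fun k _ => ?_
      rw [Aux.fderiv_vec_eq_mulVec (hfd x hx) Y, hφexp k i]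
      rfl
  -- final assembly
  rw [heval X P, heval (J1 *ᵥ X) (Pblock J₁ x p *ᵥ X + J1ᵀ *ᵥ P)]
  dsimp only
  rw [Prod.mk.injEq]
  have hPb1 : ∀ k j, Pblock J₁ x p k j = DJ1p j k - DJ1p k j := by
    intro k j
    show ∑ t, p t * (pd (fun y => J₁ y t k) j x - pd (fun y => J₁ y t j) k x) = _
    rw [show DJ1p j k = ∑ t, p t * DJ1mat j t k from rfl,
      show DJ1p k j = ∑ t, p t * DJ1mat k t j from rfl, ← Finset.sum_sub_distrib]
    refine Finset.sum_congr rfl fun t _ => ?_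
    have h1 : DJ1mat j t k = pd (fun y => J₁ y t k) j x := rfl
    have h2 : DJ1mat k t j = pd (fun y => J₁ y t j) k x := rfl
    rw [h1, h2]; ring
  have hPb2 : ∀ a b, Pblock J₂ (f x) (p ᵥ* B) a b
      = ∑ c, (p ᵥ* B) c * (DJ2 b c a - DJ2 a c b) := fun a b => rfl
  constructor
  · rw [Matrix.mulVec_mulVec, Matrix.mulVec_mulVec]
    have : F * J1 = J2 * F := hholo x hx
    rw [this]
  · funext a
    simp only [Pi.add_apply]
    have hT1 : ∑ k, p k * (∑ m, (F *ᵥ (J1 *ᵥ X)) m * H k a m)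
        = ∑ j, X j * (∑ m, (p ᵥ* Kmat m) a * J1 m j) := by
      calc ∑ k, p k * (∑ m, (F *ᵥ (J1 *ᵥ X)) m * H k a m)
          = ∑ k, ∑ m, ∑ d, ∑ j, p k * (F m d * (J1 d j * X j) * H k a m) := by
            refine Finset.sum_congr rfl fun k _ => ?_
            have h1 : ∀ m, (F *ᵥ (J1 *ᵥ X)) m = ∑ d, F m d * (∑ j, J1 d j * X j) := by
              intro m; simp [Matrix.mulVec, dotProduct]
            simp only [h1, Finset.mul_sum, Finset.sum_mul]
        _ = ∑ j, ∑ k, ∑ m, ∑ d, p k * (F m d * (J1 d j * X j) * H k a m) :=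
            Aux.rot4 fun k m d j => p k * (F m d * (J1 d j * X j) * H k a m)
        _ = ∑ j, X j * (∑ m, (p ᵥ* Kmat m) a * J1 m j) := by
            refine Finset.sum_congr rfl fun j _ => ?_
            rw [Finset.mul_sum]
            rw [show (∑ k, ∑ m, ∑ d, p k * (F m d * (J1 d j * X j) * H k a m))
                = ∑ d, ∑ k, ∑ m, p k * (F m d * (J1 d j * X j) * H k a m) from
              Aux.rot3 fun k m d => p k * (F m d * (J1 d j * X j) * H k a m)]
            have h2 : ∀ d, (p ᵥ* Kmat d) a = ∑ k, p k * (∑ m, F m d * H k a m) := by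
              intro d; rw [Aux.vecMul_apply]; rfl
            simp only [h2, Finset.mul_sum, Finset.sum_mul]
            exact Finset.sum_congr rfl fun d _ => Finset.sum_congr rfl fun k _ =>
              Finset.sum_congr rfl fun m _ => by ring
    have hT2 : ∑ k, B k a * ((Pblock J₁ x p *ᵥ X) k)
        = ∑ j, X j * (∑ i, B i a * (DJ1p j i - DJ1p i j)) := by
      calc ∑ k, B k a * ((Pblock J₁ x p *ᵥ X) k)
          = ∑ k, ∑ j, B k a * ((DJ1p j k - DJ1p k j) * X j) := by
            refine Finset.sum_congr rfl fun k _ => ?_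
            have : (Pblock J₁ x p *ᵥ X) k = ∑ j, (DJ1p j k - DJ1p k j) * X j := by
              simp only [Matrix.mulVec, dotProduct]
              exact Finset.sum_congr rfl fun j _ => by rw [hPb1 k j]
            rw [this, Finset.mul_sum]
        _ = ∑ j, ∑ k, B k a * ((DJ1p j k - DJ1p k j) * X j) := Finset.sum_comm
        _ = ∑ j, X j * (∑ i, B i a * (DJ1p j i - DJ1p i j)) := by
            refine Finset.sum_congr rfl fun j _ => ?_
            rw [Finset.mul_sum]
            exact Finset.sum_congr rfl fun i _ => by ring
    have hS1 : (Pblock J₂ (f x) (p ᵥ* B) *ᵥ (F *ᵥ X)) a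
        = ∑ j, X j * (∑ b, (∑ c, (p ᵥ* B) c * (DJ2 b c a - DJ2 a c b)) * F b j) := by
      have h0 : (Pblock J₂ (f x) (p ᵥ* B) *ᵥ (F *ᵥ X)) a
          = ∑ b, Pblock J₂ (f x) (p ᵥ* B) a b * (∑ j, F b j * X j) := by
        simp [Matrix.mulVec, dotProduct]
      rw [h0]
      calc ∑ b, Pblock J₂ (f x) (p ᵥ* B) a b * (∑ j, F b j * X j)
          = ∑ b, ∑ j, Pblock J₂ (f x) (p ᵥ* B) a b * (F b j * X j) := by
            exact Finset.sum_congr rfl fun b _ => Finset.mul_sum _ _ _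
        _ = ∑ j, ∑ b, Pblock J₂ (f x) (p ᵥ* B) a b * (F b j * X j) := Finset.sum_comm
        _ = ∑ j, X j * (∑ b, (∑ c, (p ᵥ* B) c * (DJ2 b c a - DJ2 a c b)) * F b j) := by
            refine Finset.sum_congr rfl fun j _ => ?_
            rw [Finset.mul_sum]
            refine Finset.sum_congr rfl fun b _ => ?_
            rw [hPb2 a b]
            ring
    have hS2 : ∑ b, J2 b a * (∑ k, p k * (∑ m, (F *ᵥ X) m * H k b m))
        = ∑ j, X j * (∑ b, J2 b a * (p ᵥ* Kmat j) b) := by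
      calc ∑ b, J2 b a * (∑ k, p k * (∑ m, (F *ᵥ X) m * H k b m))
          = ∑ b, ∑ k, ∑ m, ∑ j, J2 b a * (p k * ((F m j * X j) * H k b m)) := by
            refine Finset.sum_congr rfl fun b _ => ?_
            have h1 : ∀ m, (F *ᵥ X) m = ∑ j, F m j * X j := by
              intro m; simp [Matrix.mulVec, dotProduct]
            simp only [h1, Finset.mul_sum, Finset.sum_mul]
        _ = ∑ j, ∑ b, ∑ k, ∑ m, J2 b a * (p k * ((F m j * X j) * H k b m)) :=
            Aux.rot4 fun b k m j => J2 b a * (p k * ((F m j * X j) * H k b m))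
        _ = ∑ j, X j * (∑ b, J2 b a * (p ᵥ* Kmat j) b) := by
            refine Finset.sum_congr rfl fun j _ => ?_
            have h2 : ∀ b, (p ᵥ* Kmat j) b = ∑ k, p k * (∑ m, F m j * H k b m) := by
              intro b; rw [Aux.vecMul_apply]; rfl
            simp only [h2, Finset.mul_sum, Finset.sum_mul]
            exact Finset.sum_congr rfl fun b _ => Finset.sum_congr rfl fun k _ =>
              Finset.sum_congr rfl fun m _ => by ring
    have hT3S3 : ∑ k, B k a * ((J1ᵀ *ᵥ P) k) = ∑ b, J2 b a * (∑ k, B k b * P k) := by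
      calc ∑ k, B k a * ((J1ᵀ *ᵥ P) k)
          = ∑ k, ∑ d, B k a * (J1 d k * P d) := by
            refine Finset.sum_congr rfl fun k _ => ?_
            have : (J1ᵀ *ᵥ P) k = ∑ d, J1 d k * P d := by
              simp [Matrix.mulVec, dotProduct, Matrix.transpose_apply]
            rw [this, Finset.mul_sum]
        _ = ∑ d, (∑ k, J1 d k * B k a) * P d := by
            rw [Finset.sum_comm]
            refine Finset.sum_congr rfl fun d _ => ?_
            rw [Finset.sum_mul]
            exact Finset.sum_congr rfl fun k _ => by ring
        _ = ∑ d, (J1 * B) d a * P d := by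
            refine Finset.sum_congr rfl fun d _ => ?_
            rw [Matrix.mul_apply]
        _ = ∑ d, (B * J2) d a * P d := by rw [hJB]
        _ = ∑ b, J2 b a * (∑ k, B k b * P k) := by
            calc ∑ d, (B * J2) d a * P d
                = ∑ d, ∑ b, B d b * J2 b a * P d := by
                  refine Finset.sum_congr rfl fun d _ => ?_
                  rw [Matrix.mul_apply, Finset.sum_mul]
              _ = ∑ b, ∑ d, B d b * J2 b a * P d := Finset.sum_comm
              _ = ∑ b, J2 b a * (∑ k, B k b * P k) := by
                  refine Finset.sum_congr rfl fun b _ => ?_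
                  rw [Finset.mul_sum]
                  exact Finset.sum_congr rfl fun d _ => by ring
    have hLsplit : ∑ k, (p k * (∑ m, (F *ᵥ (J1 *ᵥ X)) m * H k a m)
          + B k a * ((Pblock J₁ x p *ᵥ X) k + (J1ᵀ *ᵥ P) k))
        = (∑ k, p k * (∑ m, (F *ᵥ (J1 *ᵥ X)) m * H k a m))
          + ((∑ k, B k a * ((Pblock J₁ x p *ᵥ X) k)) + ∑ k, B k a * ((J1ᵀ *ᵥ P) k)) := by
      rw [← Finset.sum_add_distrib, ← Finset.sum_add_distrib]
      exact Finset.sum_congr rfl fun k _ => by ring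
    have hRsplit : (J2ᵀ *ᵥ (fun i => ∑ k, (p k * (∑ m, (F *ᵥ X) m * H k i m) + B k i * P k))) a
        = (∑ b, J2 b a * (∑ k, p k * (∑ m, (F *ᵥ X) m * H k b m)))
          + ∑ b, J2 b a * (∑ k, B k b * P k) := by
      have h0 : (J2ᵀ *ᵥ (fun i => ∑ k, (p k * (∑ m, (F *ᵥ X) m * H k i m) + B k i * P k))) a
          = ∑ b, J2 b a * (∑ k, (p k * (∑ m, (F *ᵥ X) m * H k b m) + B k b * P k)) := by
        simp [Matrix.mulVec, dotProduct, Matrix.transpose_apply]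
      rw [h0, ← Finset.sum_add_distrib]
      refine Finset.sum_congr rfl fun b _ => ?_
      rw [Finset.sum_add_distrib, mul_add]
    rw [hLsplit, hRsplit, hT1, hT2, hS1, hS2, hT3S3]
    have hX : ∑ j, X j * (∑ m, (p ᵥ* Kmat m) a * J1 m j)
          + ∑ j, X j * (∑ i, B i a * (DJ1p j i - DJ1p i j))
        = ∑ j, X j * (∑ b, (∑ c, (p ᵥ* B) c * (DJ2 b c a - DJ2 a c b)) * F b j)
          + ∑ j, X j * (∑ b, J2 b a * (p ᵥ* Kmat j) b) := by
      rw [← Finset.sum_add_distrib, ← Finset.sum_add_distrib]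
      refine Finset.sum_congr rfl fun j _ => ?_
      rw [← mul_add, ← mul_add, hcore a j]
    linarith [hX]
end
end
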